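/- Let m ≥ n ≥ 1 be integers such that C(m, n)·(21n + 552)·4^((n+37)/11) ≥ (1/6)·7^((2n-8)/11). Then for sufficiently large n, (1/n)·log C(m, n) ≥ (2/11)·(log 7 - log 2) - o(1); in particular m ≥ (1.059 - o(1))·n. Concretely: for every ε > 0 there exists N such that for all n ≥ N, any such m satisfies m ≥ (1.059 - ε)·n. -/

import Mathlib

-- Choose bound: C(n+k, n) * n^n * k^k ≤ (n+k)^(n+k)
lemma aux_choose_bound (n k : ℕ) :
    (n + k).choose n * (n ^ n * k ^ k) ≤ (n + k) ^ (n + k) := by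
  have h := add_pow (R := ℕ) n k (n + k)
  have hmem : n ∈ Finset.range (n + k + 1) := Finset.mem_range.mpr (by omega)
  have hs := Finset.single_le_sum
    (f := fun j => n ^ j * k ^ (n + k - j) * ((n + k).choose j))
    (fun i _ => Nat.zero_le _) hmem
  simp only [Nat.cast_id] at h
  calc (n + k).choose n * (n ^ n * k ^ k)
      = n ^ n * k ^ (n + k - n) * ((n + k).choose n) := by
        rw [Nat.add_sub_cancel_left]; ring
    _ ≤ ∑ j ∈ Finset.range (n + k + 1), n ^ j * k ^ (n + k - j) * ((n + k).choose j) := hs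
    _ = (n + k) ^ (n + k) := h.symm

-- Monotonicity of G(t) = (c+t) log(c+t) - t log t on (0, ∞)
lemma aux_mono (c : ℝ) (hc : 0 < c) {x y : ℝ} (hx : 0 < x) (hxy : x ≤ y) :
    (c + x) * Real.log (c + x) - x * Real.log x ≤
      (c + y) * Real.log (c + y) - y * Real.log y := by
  set F : ℝ → ℝ := fun t => (c + t) * Real.log (c + t) - t * Real.log t with hF
  have hd : ∀ t : ℝ, 0 < t → HasDerivAt F (Real.log (c + t) - Real.log t) t := by
    intro t ht
    have h1 : HasDerivAt (fun u : ℝ => u * Real.log u) (Real.log (c + t) + 1) (c + t) :=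
      Real.hasDerivAt_mul_log (by positivity)
    have h2 : HasDerivAt (fun s : ℝ => c + s) 1 t := (hasDerivAt_id t).const_add c
    have h3 := h1.comp t h2
    have h4 : HasDerivAt (fun u : ℝ => u * Real.log u) (Real.log t + 1) t :=
      Real.hasDerivAt_mul_log ht.ne'
    have h5 := h3.sub h4
    exact h5.congr_deriv (by ring)
  have hmono : MonotoneOn F (Set.Icc x y) := by
    apply monotoneOn_of_deriv_nonneg (convex_Icc x y)
    · intro t ht
      exact ((hd t (lt_of_lt_of_le hx ht.1)).differentiableAt.continuousAt).continuousWithinAt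
    · intro t ht
      rw [interior_Icc] at ht
      exact ((hd t (lt_trans hx ht.1)).differentiableAt).differentiableWithinAt
    · intro t ht
      rw [interior_Icc] at ht
      have htpos : 0 < t := lt_trans hx ht.1
      rw [(hd t htpos).deriv]
      have : Real.log t ≤ Real.log (c + t) := Real.log_le_log htpos (by linarith)
      linarith
  exact hmono (Set.left_mem_Icc.mpr hxy) (Set.right_mem_Icc.mpr hxy) hxy

-- Key numerical inequality
lemma aux_num : 11649 * Real.log 1059 + 1000 * Real.log 4 <
    2000 * Real.log 7 + 11000 * Real.log 1000 + 649 * Real.log 59 := by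
  have hnat : (1059:ℕ)^11649 * 4^1000 < 7^2000 * (1000^11000 * 59^649) := by decide +kernel
  have hreal : (1059:ℝ)^11649 * 4^1000 < 7^2000 * (1000^11000 * 59^649) := by
    exact_mod_cast hnat
  have hlog := Real.log_lt_log (by positivity) hreal
  rw [Real.log_mul (by positivity) (by positivity),
      Real.log_mul (by positivity) (by positivity),
      Real.log_mul (by positivity) (by positivity),
      Real.log_pow, Real.log_pow, Real.log_pow, Real.log_pow, Real.log_pow] at hlog
  push_cast at hlog
  linarith

set_option maxHeartbeats 1000000 in
theorem stmt_13 :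
    ∀ ε : ℝ, 0 < ε → ∃ N : ℕ, ∀ n : ℕ, N ≤ n → ∀ m : ℕ, n ≤ m →
      ((m.choose n : ℝ) * (21 * (n : ℝ) + 552) * (4 : ℝ) ^ (((n : ℝ) + 37) / 11) ≥
        (1 / 6 : ℝ) * (7 : ℝ) ^ ((2 * (n : ℝ) - 8) / 11)) →
      (m : ℝ) ≥ (1.059 - ε) * n := by
  intro ε hε
  obtain ⟨L1059, hL1059⟩ : ∃ x : ℝ, x = Real.log 1059 := ⟨_, rfl⟩
  obtain ⟨L1000, hL1000⟩ : ∃ x : ℝ, x = Real.log 1000 := ⟨_, rfl⟩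
  obtain ⟨L59, hL59⟩ : ∃ x : ℝ, x = Real.log 59 := ⟨_, rfl⟩
  obtain ⟨L4, hL4⟩ : ∃ x : ℝ, x = Real.log 4 := ⟨_, rfl⟩
  obtain ⟨L7, hL7⟩ : ∃ x : ℝ, x = Real.log 7 := ⟨_, rfl⟩
  obtain ⟨δ, hδdef⟩ : ∃ x : ℝ, x = 2 * L7 / 11 - L4 / 11 -
      ((1059/1000) * (L1059 - L1000) + (59/1000) * (L1000 - L59)) := ⟨_, rfl⟩
  have hδ : 0 < δ := by
    have h := aux_num
    rw [hδdef]
    rw [← hL1059, ← hL1000, ← hL59, ← hL4, ← hL7] at h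
    linarith
  obtain ⟨N₀, hN₀⟩ := exists_nat_ge (16 / δ ^ 2 + 4000 / δ)
  refine ⟨N₀ + 1, ?_⟩
  intro n hn m hnm H
  have hnR : (N₀ : ℝ) + 1 ≤ (n : ℝ) := by exact_mod_cast hn
  have hn1 : (1 : ℝ) ≤ (n : ℝ) := by
    have : (0:ℝ) ≤ N₀ := Nat.cast_nonneg _
    linarith
  have hnpos : (0 : ℝ) < (n : ℝ) := by linarith
  rcases le_or_gt ((1.059 : ℝ) * n) (m : ℝ) with hcase | hcase
  · nlinarith
  · exfalso
    obtain ⟨k, rfl⟩ : ∃ k, m = n + k := ⟨m - n, (Nat.add_sub_cancel' hnm).symm⟩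
    have hkle : (k : ℝ) ≤ 59 / 1000 * n := by
      push_cast at hcase
      norm_num at hcase
      linarith
    -- log of hypothesis
    have hposR : (0:ℝ) < (1 / 6 : ℝ) * (7 : ℝ) ^ ((2 * (n : ℝ) - 8) / 11) := by positivity
    have hCpos : (0:ℝ) < ((n + k).choose n : ℝ) := by
      exact_mod_cast Nat.choose_pos (Nat.le_add_right n k)
    have hPpos : (0:ℝ) < 21 * (n : ℝ) + 552 := by linarith
    have hlogH : Real.log (1/6) + (2 * (n:ℝ) - 8) / 11 * L7 ≤
        Real.log ((n + k).choose n : ℝ) + Real.log (21 * (n:ℝ) + 552) + ((n:ℝ) + 37) / 11 * L4 := by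
      have h := Real.log_le_log hposR H
      rw [Real.log_mul (by positivity) (by positivity),
          Real.log_mul (by positivity) (by positivity),
          Real.log_mul (by positivity) (by positivity),
          Real.log_rpow (by norm_num), Real.log_rpow (by norm_num)] at h
      rw [hL4, hL7]
      linarith
    -- bound on log choose
    have hlogC : Real.log ((n + k).choose n : ℝ) ≤
        (n : ℝ) * ((1059/1000) * (L1059 - L1000) + (59/1000) * (L1000 - L59)) := by
      rcases Nat.eq_zero_or_pos k with hk0 | hkpos
      · subst hk0
        simp only [Nat.add_zero, Nat.choose_self, Nat.cast_one, Real.log_one]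
        have h1 : L1000 ≤ L1059 := by
          rw [hL1000, hL1059]; exact Real.log_le_log (by norm_num) (by norm_num)
        have h2 : L59 ≤ L1000 := by
          rw [hL59, hL1000]; exact Real.log_le_log (by norm_num) (by norm_num)
        nlinarith
      · have hkR : (0:ℝ) < (k : ℝ) := by exact_mod_cast hkpos
        have hA : (((n + k).choose n : ℝ)) * ((n:ℝ) ^ n * (k:ℝ) ^ k) ≤ ((n:ℝ) + k) ^ (n + k) := by
          have := aux_choose_bound n k
          have h2 : (((n+k).choose n * (n ^ n * k ^ k) : ℕ) : ℝ) ≤ (((n+k)^(n+k) : ℕ) : ℝ) := by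
            exact_mod_cast this
          push_cast at h2
          convert h2 using 2
        have h1 : Real.log ((n + k).choose n : ℝ) + (n:ℝ) * Real.log n + (k:ℝ) * Real.log k ≤
            ((n:ℝ) + k) * Real.log ((n:ℝ) + k) := by
          have hl := Real.log_le_log (by positivity) hA
          rw [Real.log_mul (by positivity) (by positivity),
              Real.log_mul (by positivity) (by positivity),
              Real.log_pow, Real.log_pow, Real.log_pow] at hl
          push_cast at hl
          linarith
        have hB := aux_mono (n : ℝ) hnpos hkR hkle
        rw [show (n:ℝ) + 59 / 1000 * n = 1059 / 1000 * n by ring] at hB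
        have eB : Real.log ((1059:ℝ) / 1000 * n) = L1059 - L1000 + Real.log n := by
          rw [Real.log_mul (by norm_num) (ne_of_gt hnpos),
              Real.log_div (by norm_num) (by norm_num), hL1059, hL1000]
        have eC : Real.log ((59:ℝ) / 1000 * n) = L59 - L1000 + Real.log n := by
          rw [Real.log_mul (by norm_num) (ne_of_gt hnpos),
              Real.log_div (by norm_num) (by norm_num), hL59, hL1000]
        rw [eB, eC] at hB
        linarith [hB, h1]
    -- bound on log P
    have hlogn : Real.log (n:ℝ) ≤ 2 * Real.sqrt n := by
      have hs : Real.log (Real.sqrt n) ≤ Real.sqrt n - 1 :=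
        Real.log_le_sub_one_of_pos (Real.sqrt_pos.mpr hnpos)
      have he : Real.log (Real.sqrt n) = Real.log n / 2 := Real.log_sqrt hnpos.le
      linarith
    have hlogP : Real.log (21 * (n:ℝ) + 552) ≤ 1023 + 2 * Real.sqrt n := by
      have h1 : (21 * (n:ℝ) + 552) ≤ 1024 * n := by linarith
      have h2 : Real.log (21 * (n:ℝ) + 552) ≤ Real.log (1024 * n) :=
        Real.log_le_log hPpos h1
      rw [Real.log_mul (by norm_num) (ne_of_gt hnpos)] at h2
      have h3 : Real.log (1024:ℝ) ≤ 1023 := by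
        linarith [Real.log_le_sub_one_of_pos (show (0:ℝ) < 1024 by norm_num)]
      linarith
    -- constant bounds
    have hl6 : Real.log (1/6 : ℝ) = -Real.log 6 := by
      rw [one_div, Real.log_inv]
    have hb6 : Real.log (6:ℝ) ≤ 5 := by
      linarith [Real.log_le_sub_one_of_pos (show (0:ℝ) < 6 by norm_num)]
    have hb4 : L4 ≤ 3 := by
      rw [hL4]; linarith [Real.log_le_sub_one_of_pos (show (0:ℝ) < 4 by norm_num)]
    have hb7 : L7 ≤ 6 := by
      rw [hL7]; linarith [Real.log_le_sub_one_of_pos (show (0:ℝ) < 7 by norm_num)]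
    have hb4' : 0 ≤ L4 := by rw [hL4]; exact Real.log_nonneg (by norm_num)
    have hb7' : 0 ≤ L7 := by rw [hL7]; exact Real.log_nonneg (by norm_num)
    -- sqrt bound
    have hnR' : 16 / δ ^ 2 + 4000 / δ ≤ (n : ℝ) := by linarith
    have hd1 : (0:ℝ) ≤ 16 / δ ^ 2 := by positivity
    have hd2 : (0:ℝ) ≤ 4000 / δ := by positivity
    have hsq : 4 / δ ≤ Real.sqrt n := by
      rw [show (4:ℝ) / δ = Real.sqrt ((4/δ)^2) from (Real.sqrt_sq (by positivity)).symm]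
      apply Real.sqrt_le_sqrt
      have he : ((4:ℝ)/δ)^2 = 16 / δ^2 := by rw [div_pow]; norm_num
      linarith
    have hs4 : 4 ≤ δ * Real.sqrt n := by
      rw [div_le_iff₀ hδ] at hsq
      linarith
    have hsn : Real.sqrt n * Real.sqrt n = n := Real.mul_self_sqrt hnpos.le
    have h2s : 2 * Real.sqrt n ≤ δ / 2 * n := by
      have h1 := mul_le_mul_of_nonneg_right hs4 (Real.sqrt_nonneg (n:ℝ))
      have h2 : δ * (Real.sqrt n * Real.sqrt n) = δ * n := by rw [hsn]
      nlinarith [h1, h2]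
    have h2000 : (2000:ℝ) < δ / 2 * n := by
      have h1 : 4000 / δ + 1 ≤ (n:ℝ) := by linarith
      have h2 := mul_le_mul_of_nonneg_left h1 hδ.le
      have h3 : δ * (4000 / δ) = 4000 := by field_simp
      nlinarith
    -- bridge
    have hbridge : δ * (n:ℝ) = 2 * L7 / 11 * n - L4 / 11 * n -
        (n : ℝ) * ((1059/1000) * (L1059 - L1000) + (59/1000) * (L1000 - L59)) := by
      rw [hδdef]; ring
    rw [hl6] at hlogH
    linarith [hlogH, hlogC, hlogP, hbridge, h2s, h2000, hb6, hb4, hb7, hb4', hb7', hnpos, hlogn]
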